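/- If A ∈ ℝ^{n×n} satisfies σ_n(A + I) > 2, then the AVE Ax + |x| = b has a unique solution for every b ∈ ℝ^n. -/

import Mathlib

open Matrix

/-- A square real matrix is a `P`-matrix if all of its principal minors are positive. -/
def IsPMatrix {n : ℕ} (M : Matrix (Fin n) (Fin n) ℝ) : Prop :=
  ∀ s : Finset (Fin n), s.Nonempty →
    0 < (M.submatrix (fun i : s => (i : Fin n)) (fun i : s => (i : Fin n))).det

/-- The (unordered) singular values of a real square matrix: square roots of the
eigenvalues of `Aᵀ * A`. -/
noncomputable def singVals {n : ℕ} (A : Matrix (Fin n) (Fin n) ℝ) : Fin n → ℝ :=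
  fun i => Real.sqrt ((show (Aᵀ * A).IsHermitian by
    rw [← Matrix.conjTranspose_eq_transpose_of_trivial]
    exact Matrix.isHermitian_conjTranspose_mul_self A).eigenvalues i)

/-- `svalsDecr A i` is the `i`-th largest singular value of `A` (so `svalsDecr A 0 = σ₁`). -/
noncomputable def svalsDecr {n : ℕ} (A : Matrix (Fin n) (Fin n) ℝ) : Fin n → ℝ :=
  fun i => singVals A (Tuple.sort (singVals A) (Fin.rev i))

/-- The maximal singular value `σ₁`. -/
noncomputable def maxSV {n : ℕ} (A : Matrix (Fin n) (Fin n) ℝ) : ℝ :=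
  ⨆ i, singVals A i

/-- The minimal singular value `σₙ`. -/
noncomputable def minSV {n : ℕ} (A : Matrix (Fin n) (Fin n) ℝ) : ℝ :=
  ⨅ i, singVals A i

/-- The spectral radius of a real square matrix (as the spectral radius of its
complexification), valued in `ℝ≥0∞`. -/
noncomputable def specRad {n : ℕ} (A : Matrix (Fin n) (Fin n) ℝ) : ENNReal :=
  spectralRadius ℂ (A.map (Complex.ofReal))

/-!
Write the equation as `(A + I) x + (|x| - x) = b`. The map `x ↦ |x| - x` is `2`-Lipschitz for the
Euclidean norm, while `‖(A + I) x‖ ≥ σₙ(A + I) ‖x‖` with `σₙ(A + I) > 2`. A map that differs from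
an invertible linear map `T` by a Lipschitz map whose constant is below `‖T⁻¹‖⁻¹` is a bijection
(this is the global form of the inverse function theorem), so the equation has exactly one
solution for every right-hand side.
-/

open NNReal Function WithLp
open scoped InnerProductSpace

theorem Matrix.IsHermitian.mul_norm_sq_le_inner_toEuclideanLin {ι : Type*} [Fintype ι]
    [DecidableEq ι] {M : Matrix ι ι ℝ} (hM : M.IsHermitian) {c : ℝ}
    (hc : ∀ i, c ≤ hM.eigenvalues i) (x : EuclideanSpace ℝ ι) :
    c * ‖x‖ ^ 2 ≤ ⟪x, toEuclideanLin M x⟫_ℝ := by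
  set v := hM.eigenvectorBasis
  have hMv (i : ι) : ⟪v i, toEuclideanLin M x⟫_ℝ = hM.eigenvalues i * ⟪v i, x⟫_ℝ := by
    have hv : toEuclideanLin M (v i) = hM.eigenvalues i • v i :=
      WithLp.ofLp_injective 2 (hM.mulVec_eigenvectorBasis i)
    rw [← isSymmetric_toEuclideanLin_iff.mpr hM, hv, real_inner_smul_left]
  rw [← v.sum_inner_mul_inner, ← v.sum_sq_inner_right, Finset.mul_sum]
  refine Finset.sum_le_sum fun i _ => ?_
  rw [hMv, real_inner_comm x]
  nlinarith [hc i, sq_nonneg ⟪v i, x⟫_ℝ]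

theorem minSV_nonneg {n : ℕ} (B : Matrix (Fin n) (Fin n) ℝ) : 0 ≤ minSV B :=
  Real.iInf_nonneg fun _ => Real.sqrt_nonneg _

theorem minSV_mul_norm_le_norm_toEuclideanLin {n : ℕ} (B : Matrix (Fin n) (Fin n) ℝ)
    (x : EuclideanSpace ℝ (Fin n)) : minSV B * ‖x‖ ≤ ‖toEuclideanLin B x‖ := by
  have hH : (Bᵀ * B).IsHermitian := by
    simpa using isHermitian_conjTranspose_mul_self B
  have hc (i : Fin n) : minSV B ^ 2 ≤ hH.eigenvalues i := by
    have hi : minSV B ≤ √(hH.eigenvalues i) := ciInf_le (Finite.bddBelow_range _) i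
    calc minSV B ^ 2 ≤ √(hH.eigenvalues i) ^ 2 := by gcongr; exact minSV_nonneg B
      _ = hH.eigenvalues i := Real.sq_sqrt (eigenvalues_conjTranspose_mul_self_nonneg B i)
  have hquad : ⟪x, toEuclideanLin (Bᵀ * B) x⟫_ℝ = ‖toEuclideanLin B x‖ ^ 2 := by
    rw [toLpLin_mul_same, ← conjTranspose_eq_transpose_of_trivial,
      toEuclideanLin_conjTranspose_eq_adjoint, LinearMap.comp_apply, LinearMap.adjoint_inner_right,
      real_inner_self_eq_norm_sq]
  have := hH.mul_norm_sq_le_inner_toEuclideanLin hc x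
  rw [hquad, ← mul_pow] at this
  exact (pow_le_pow_iff_left₀ (by positivity [minSV_nonneg B]) (norm_nonneg _) two_ne_zero).1 this

theorem PiLp.lipschitzWith_toLp_map {ι α β : Type*} [Fintype ι] [SeminormedAddCommGroup α]
    [SeminormedAddCommGroup β] {f : α → β} {K : ℝ≥0} (hf : LipschitzWith K f) :
    LipschitzWith K fun x : PiLp 2 (fun _ : ι => α) => toLp 2 fun i => f (x i) := by
  refine LipschitzWith.of_dist_le_mul fun x y => ?_
  refine (pow_le_pow_iff_left₀ dist_nonneg (by positivity) two_ne_zero).1 ?_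
  rw [mul_pow, PiLp.dist_sq_eq_of_L2, PiLp.dist_sq_eq_of_L2, Finset.mul_sum]
  refine Finset.sum_le_sum fun i _ => ?_
  rw [← mul_pow]
  exact pow_le_pow_left₀ dist_nonneg (hf.dist_le_mul _ _) 2

theorem ContinuousLinearEquiv.bijective_add_of_lipschitzWith {𝕜 E F : Type*}
    [NontriviallyNormedField 𝕜] [NormedAddCommGroup E] [NormedSpace 𝕜 E] [CompleteSpace E]
    [NormedAddCommGroup F] [NormedSpace 𝕜 F] (T : E ≃L[𝕜] F) {s : ℝ}
    (hT : ∀ x, s * ‖x‖ ≤ ‖T x‖) {g : E → F} {K : ℝ≥0} (hg : LipschitzWith K g) (hK : K < s) :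
    Bijective fun x => T x + g x := by
  have hs : 0 < s := K.coe_nonneg.trans_lt hK
  have happrox : ApproximatesLinearOn (fun x => T x + g x) (T : E →L[𝕜] F) Set.univ K := by
    intro x _ y _
    calc ‖T x + g x - (T y + g y) - T (x - y)‖ = dist (g x) (g y) := by
          rw [map_sub, dist_eq_norm]; congr 1; abel
      _ ≤ K * ‖x - y‖ := by rw [← dist_eq_norm]; exact hg.dist_le_mul x y
  have hc : Subsingleton E ∨ K < ‖(T.symm : F →L[𝕜] E)‖₊⁻¹ := by
    refine T.subsingleton_or_nnnorm_symm_pos.imp id fun hN => ?_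
    have hsymm : ‖(T.symm : F →L[𝕜] E)‖ ≤ s⁻¹ :=
      ContinuousLinearMap.opNorm_le_bound _ (inv_nonneg.2 hs.le) fun y =>
        (le_inv_mul_iff₀ hs).2 (by simpa using hT (T.symm y))
    rw [← NNReal.coe_lt_coe, NNReal.coe_inv, coe_nnnorm]
    exact hK.trans_le ((le_inv_comm₀ (by simpa using hN) hs).1 hsymm)
  exact ⟨Set.injOn_univ.1 (happrox.injOn hc), happrox.surjective hc⟩

theorem LinearMap.bijective_add_of_lipschitzWith {𝕜 E : Type*}
    [NontriviallyNormedField 𝕜] [CompleteSpace 𝕜] [NormedAddCommGroup E] [NormedSpace 𝕜 E]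
    [FiniteDimensional 𝕜 E] (T : E →ₗ[𝕜] E) {s : ℝ}
    (hT : ∀ x, s * ‖x‖ ≤ ‖T x‖) {g : E → E} {K : ℝ≥0} (hg : LipschitzWith K g) (hK : K < s) :
    Bijective fun x => T x + g x := by
  have hs : 0 < s := K.coe_nonneg.trans_lt hK
  have hinj : Injective T := (injective_iff_map_eq_zero T).2 fun x hx => by
    have := hT x
    rw [hx, norm_zero] at this
    exact norm_le_zero_iff.1 (nonpos_of_mul_nonpos_right this hs)
  have : CompleteSpace E := FiniteDimensional.complete 𝕜 E
  exact (LinearEquiv.ofInjectiveEndo T hinj).toContinuousLinearEquiv.bijective_add_of_lipschitzWith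
    hT hg hK

theorem stmt17 {n : ℕ} (A : Matrix (Fin n) (Fin n) ℝ) (h : 2 < minSV (A + 1)) :
    ∀ b : Fin n → ℝ, ∃! x : Fin n → ℝ, A *ᵥ x + |x| = b := by
  set g : EuclideanSpace ℝ (Fin n) → EuclideanSpace ℝ (Fin n) :=
    fun x => toLp 2 fun i => |x i| - x i
  have habs : LipschitzWith 2 fun t : ℝ => |t| - t := by
    have := lipschitzWith_one_norm.sub (LipschitzWith.id (α := ℝ))
    rwa [one_add_one_eq_two] at this
  have hg : LipschitzWith 2 g := PiLp.lipschitzWith_toLp_map (f := fun t => |t| - t) habs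
  have hlow := minSV_mul_norm_le_norm_toEuclideanLin (A + 1)
  have h2 : ((2 : ℝ≥0) : ℝ) < minSV (A + 1) := by exact_mod_cast h
  have hbij := LinearMap.bijective_add_of_lipschitzWith (𝕜 := ℝ) (E := EuclideanSpace ℝ (Fin n))
    _ hlow hg h2
  have hcomp : (fun x : Fin n → ℝ => A *ᵥ x + |x|) =
      ofLp ∘ (fun x => toEuclideanLin (A + 1) x + g x) ∘ toLp 2 := by
    funext x i
    simp [g]
  have hsolve : Bijective fun x : Fin n → ℝ => A *ᵥ x + |x| :=
    hcomp ▸ (WithLp.equiv 2 _).bijective.comp (hbij.comp (WithLp.equiv 2 _).symm.bijective)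
  exact hsolve.existsUnique
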